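/- Let G=(V,E) be a weighted graph with boundary ∂=A⊔B⊔C in which every connected component contains a boundary vertex, and let n≥2 be an integer. Then: (i) the integer program min Σ_{e∈E} w(e)ρ(e) over ρ:E→ℤ_{≥0} subject to ρ(L)≥1 for every path L∈𝒫_{A,B}∪𝒫_{A,C}∪𝒫_{B,C} has optimal value 𝒜_s(A:B:C), the minimal triway cut area with unit tensions s=(1,1,1); (ii) its linear relaxation, with ρ:E→ℝ_{≥0} and the same constraints, has optimal value ½(𝒜(A:B∪C)+𝒜(B:A∪C)+𝒜(C:A∪B)). -/

import Mathlib

open scoped Classical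

noncomputable section

namespace RTN

/-! ## Set partitions -/

/-- Number of blocks of a set partition (as an integer). -/
def nb {α : Type*} (p : Setoid α) : ℤ := Nat.card (Quotient p)

/-- The partition distance `d(p,q) = #(p) + #(q) - 2 #(p ⊔ q)`. -/
def pdist {α : Type*} (p q : Setoid α) : ℤ := nb p + nb q - 2 * nb (p ⊔ q)

lemma pdist_comm {α : Type*} (p q : Setoid α) : pdist p q = pdist q p := by
  unfold pdist
  rw [sup_comm p q]
  ring

/-- `k` is a singlet (block of size one) of the partition `p`. -/
def IsSinglet {α : Type*} (p : Setoid α) (k : α) : Prop := ∀ y, p.r k y → y = k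

/-- The number of singlets `#₁(p)` of a partition. -/
def nS {α : Type*} (p : Setoid α) : ℤ := Nat.card {k : α // IsSinglet p k}

/-- The singlet distance `d₁(s₁,s₂) = #₁(s₁) + #₁(s₂) - 2 #₁(s₁ ⊔ s₂)`. -/
def sdist {α : Type*} (s₁ s₂ : Setoid α) : ℤ := nS s₁ + nS s₂ - 2 * nS (s₁ ⊔ s₂)

/-- The singlet pattern `s(p)`: the coarsest partition whose singlets are exactly
those of `p` (all non-singlet elements lie in one block). -/
def spat {α : Type*} (p : Setoid α) : Setoid α where
  r x y := x = y ∨ (¬ IsSinglet p x ∧ ¬ IsSinglet p y)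
  iseqv := by
    refine ⟨fun x => Or.inl rfl, ?_, ?_⟩
    · intro x y h
      rcases h with rfl | ⟨hx, hy⟩
      · exact Or.inl rfl
      · exact Or.inr ⟨hy, hx⟩
    · intro x y z h1 h2
      rcases h1 with rfl | ⟨hx, hy⟩
      · exact h2
      · rcases h2 with rfl | ⟨_, hz⟩
        · exact Or.inr ⟨hx, hy⟩
        · exact Or.inr ⟨hx, hz⟩

/-- The bit `b^k(p)`: `0` if `p` has a singlet at `k`, else `1`. -/
def bbit {α : Type*} (p : Setoid α) (k : α) : ℤ := if IsSinglet p k then 0 else 1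

/-- The size of the block of `p` containing `x`. -/
def blockSize {α : Type*} (p : Setoid α) (x : α) : ℕ := Nat.card {y : α // p.r x y}

noncomputable instance {α : Type*} [Finite α] (s : Setoid α) : Fintype (Quotient s) :=
  Fintype.ofFinite _

/-! ## Permutations -/

/-- The partition of `α` into orbits (cycles) of a permutation. -/
def orbitSetoid {α : Type*} (g : Equiv.Perm α) : Setoid α where
  r x y := ∃ k : ℤ, (g ^ k) x = y
  iseqv := by
    refine ⟨fun x => ⟨0, by simp⟩, ?_, ?_⟩
    · rintro x y ⟨k, rfl⟩
      exact ⟨-k, by simp [← Equiv.Perm.mul_apply, ← zpow_add]⟩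
    · rintro x y z ⟨k, rfl⟩ ⟨l, rfl⟩
      exact ⟨l + k, by rw [zpow_add, Equiv.Perm.mul_apply]⟩

/-- The number of cycles `#(g)` of a permutation (fixed points included). -/
def ncyc {α : Type*} (g : Equiv.Perm α) : ℤ := nb (orbitSetoid g)

/-- The Cayley distance `d(g,h) = N - #(g h⁻¹)`. -/
def cayley {α : Type*} [Fintype α] (g h : Equiv.Perm α) : ℤ :=
  (Fintype.card α : ℤ) - ncyc (g * h⁻¹)

lemma orbitSetoid_inv {α : Type*} (g : Equiv.Perm α) : orbitSetoid g⁻¹ = orbitSetoid g := by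
  apply Setoid.ext
  intro x y
  constructor
  · rintro ⟨k, hk⟩
    exact ⟨-k, by rw [← inv_zpow']; exact hk⟩
  · rintro ⟨k, hk⟩
    exact ⟨-k, by rw [inv_zpow', neg_neg]; exact hk⟩

lemma cayley_comm {α : Type*} [Fintype α] (g h : Equiv.Perm α) : cayley g h = cayley h g := by
  unfold cayley ncyc
  rw [show h * g⁻¹ = (g * h⁻¹)⁻¹ by rw [mul_inv_rev, inv_inv], orbitSetoid_inv]

/-- Coarse graining of a partition `p` by the blocks of `P(g₀)`: the partition of the set
of blocks of `P(g₀)` induced by `p ⊔ P(g₀)`. -/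
def coarse {α : Type*} (g₀ : Equiv.Perm α) (p : Setoid α) :
    Setoid (Quotient (orbitSetoid g₀)) where
  r u v := ∃ x y : α, Quotient.mk (orbitSetoid g₀) x = u ∧ Quotient.mk (orbitSetoid g₀) y = v ∧
    (p ⊔ orbitSetoid g₀).r x y
  iseqv := by
    refine ⟨?_, ?_, ?_⟩
    · intro u
      obtain ⟨x, rfl⟩ := Quotient.exists_rep u
      exact ⟨x, x, rfl, rfl, (p ⊔ orbitSetoid g₀).iseqv.refl x⟩
    · rintro u v ⟨x, y, hx, hy, hxy⟩
      exact ⟨y, x, hy, hx, (p ⊔ orbitSetoid g₀).iseqv.symm hxy⟩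
    · rintro u v w ⟨x, y, hx, hy, hxy⟩ ⟨y', z, hy', hz, hyz⟩
      refine ⟨x, z, hx, hz, ?_⟩
      have h1 : (orbitSetoid g₀).r y y' := Quotient.exact (hy.trans hy'.symm)
      have h2 : (p ⊔ orbitSetoid g₀).r y y' :=
        (le_sup_right : orbitSetoid g₀ ≤ p ⊔ orbitSetoid g₀) h1
      exact (p ⊔ orbitSetoid g₀).iseqv.trans hxy
        ((p ⊔ orbitSetoid g₀).iseqv.trans h2 hyz)

/-- The coarse graining `q_{g₀}(g) ∈ P_{#(g₀)}` of a permutation `g`. -/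
def qc {α : Type*} (g₀ g : Equiv.Perm α) : Setoid (Quotient (orbitSetoid g₀)) :=
  coarse g₀ (orbitSetoid g)

/-! ## Standard reflected-entropy boundary elements -/

/-- `g_B`, the product of `n` disjoint `m`-cycles `(k,ℓ) ↦ (k,ℓ+1)`. -/
def gB (n m : ℕ) : Equiv.Perm (Fin n × Fin m) :=
  Equiv.prodCongr (Equiv.refl (Fin n)) (finRotate m)

/-- `γ`, cyclically shifting `k ↦ k+1` on the elements with `ℓ` in the lower half,
fixing the rest. -/
def gamma (n m : ℕ) : Equiv.Perm (Fin n × Fin m) where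
  toFun x := if m / 2 ≤ (x.2 : ℕ) then (finRotate n x.1, x.2) else x
  invFun x := if m / 2 ≤ (x.2 : ℕ) then ((finRotate n).symm x.1, x.2) else x
  left_inv := by
    intro x
    by_cases h : m / 2 ≤ (x.2 : ℕ) <;> simp only [h, ite_true, ite_false, Equiv.symm_apply_apply, Equiv.apply_symm_apply, if_false]
  right_inv := by
    intro x
    by_cases h : m / 2 ≤ (x.2 : ℕ) <;> simp only [h, ite_true, ite_false, Equiv.symm_apply_apply, Equiv.apply_symm_apply, if_false]

/-- `g_A = γ⁻¹ g_B γ`. -/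
def gA (n m : ℕ) : Equiv.Perm (Fin n × Fin m) :=
  (gamma n m)⁻¹ * gB n m * gamma n m

/-- For even `m`, `Fin m` splits into an upper and a lower half. -/
def halfEquiv (m : ℕ) (hm : m % 2 = 0) : Fin 2 × Fin (m / 2) ≃ Fin m :=
  finProdFinEquiv.trans (finCongr (by omega))

/-- `X`, the product of the `2n` disjoint `(m/2)`-cycles cyclically permuting the
upper and the lower half of each block `k`. -/
def Xel (n m : ℕ) (hm : m % 2 = 0) : Equiv.Perm (Fin n × Fin m) :=
  Equiv.prodCongr (Equiv.refl (Fin n))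
    ((halfEquiv m hm).permCongr
      (Equiv.prodCongr (Equiv.refl (Fin 2)) (finRotate (m / 2))))

/-- The set of blocks of `P(X)`; it has `2n` elements. -/
abbrev BX (n m : ℕ) (hm : m % 2 = 0) := Quotient (orbitSetoid (Xel n m hm))

/-- `q_A = q_X(g_A) ∈ P_{2n}`. -/
def qAel (n m : ℕ) (hm : m % 2 = 0) : Setoid (BX n m hm) :=
  qc (Xel n m hm) (gA n m)

/-- `q_B = q_X(g_B) ∈ P_{2n}`. -/
def qBel (n m : ℕ) (hm : m % 2 = 0) : Setoid (BX n m hm) :=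
  qc (Xel n m hm) (gB n m)

/-! ## Doubled elements (two copies) -/

/-- Two copies of the index set `{1,…,mn}`. -/
abbrev DIdx (n m : ℕ) := (Fin n × Fin m) ⊕ (Fin n × Fin m)

/-- `g̃_A = g_A ⊕ g_A`. -/
def gAt (n m : ℕ) : Equiv.Perm (DIdx n m) := Equiv.sumCongr (gA n m) (gA n m)

/-- `g̃_B = g_B ⊕ g_B`. -/
def gBt (n m : ℕ) : Equiv.Perm (DIdx n m) := Equiv.sumCongr (gB n m) (gB n m)

/-- `X̃ = X ⊕ X`. -/
def Xt (n m : ℕ) (hm : m % 2 = 0) : Equiv.Perm (DIdx n m) :=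
  Equiv.sumCongr (Xel n m hm) (Xel n m hm)

/-- The set of blocks of `P(X̃)`; it has `4n` elements. -/
abbrev BXt (n m : ℕ) (hm : m % 2 = 0) := Quotient (orbitSetoid (Xt n m hm))

/-- `q̃_A = q_{X̃}(g̃_A) ∈ P_{4n}`. -/
def qAt (n m : ℕ) (hm : m % 2 = 0) : Setoid (BXt n m hm) :=
  qc (Xt n m hm) (gAt n m)

/-- `q̃_B = q_{X̃}(g̃_B) ∈ P_{4n}`. -/
def qBt (n m : ℕ) (hm : m % 2 = 0) : Setoid (BXt n m hm) :=
  qc (Xt n m hm) (gBt n m)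

/-- A block of `P(X̃)` lies in the first copy. -/
def inCopy1 {n m : ℕ} {hm : m % 2 = 0} (u : BXt n m hm) : Prop :=
  ∃ x, Quotient.mk (orbitSetoid (Xt n m hm)) (Sum.inl x) = u

/-- `#₁⁽¹⁾(q)`: the number of singlets of `q` among the first-copy positions. -/
def nS1 {n m : ℕ} {hm : m % 2 = 0} (q : Setoid (BXt n m hm)) : ℤ :=
  Nat.card {u : BXt n m hm // IsSinglet q u ∧ inCopy1 u}

/-- `#₁⁽²⁾(q)`: the number of singlets of `q` among the second-copy positions. -/
def nS2 {n m : ℕ} {hm : m % 2 = 0} (q : Setoid (BXt n m hm)) : ℤ :=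
  Nat.card {u : BXt n m hm // IsSinglet q u ∧ ¬ inCopy1 u}

/-- `τ ∈ P_{4n}`, the two-block partition separating the two copies. -/
def tau (n m : ℕ) (hm : m % 2 = 0) : Setoid (BXt n m hm) where
  r u v := inCopy1 u ↔ inCopy1 v
  iseqv := ⟨fun _ => Iff.rfl, Iff.symm, Iff.trans⟩

/-! ## Graphs, cuts and optimization programs -/

variable {V : Type*}

/-- Sum of an edge function along (the edge list of) a walk, with multiplicity. -/
def wkSum {β : Type*} [AddCommMonoid β] {G : SimpleGraph V} {x y : V}
    (f : Sym2 V → β) (L : G.Walk x y) : β :=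
  (L.edges.map f).sum

variable [Fintype V]

/-- Sum of an edge weight function over a set of edges. -/
def wsum (f : Sym2 V → ℝ) (S : Set (Sym2 V)) : ℝ :=
  ∑ e ∈ Finset.univ.filter (· ∈ S), f e

/-- The cut surface `μ(r)`: edges of `G` with one endpoint in `r`, the other outside. -/
def mu (G : SimpleGraph V) (r : Set V) : Set (Sym2 V) :=
  {e | e ∈ G.edgeSet ∧ ∃ x y, e = s(x, y) ∧ x ∈ r ∧ y ∉ r}

/-- `μ(r₁:r₂)`: edges of `G` with an endpoint in `r₁` and an endpoint in `r₂`. -/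
def mu2 (G : SimpleGraph V) (r₁ r₂ : Set V) : Set (Sym2 V) :=
  {e | e ∈ G.edgeSet ∧ ∃ x y, e = s(x, y) ∧ x ∈ r₁ ∧ y ∈ r₂}

/-- `r` is a cut for `X : Y`. -/
def IsCut (X Y r : Set V) : Prop := X ⊆ r ∧ Y ⊆ rᶜ

/-- The minimal cut area `𝒜(X:Y)`. -/
def minCut (G : SimpleGraph V) (w : Sym2 V → ℝ) (X Y : Set V) : ℝ :=
  sInf {a | ∃ r : Set V, IsCut X Y r ∧ a = wsum w (mu G r)}

/-- `(α,β,γ)` is a triway cut for `(A,B,C)`. -/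
def IsTriway (A B C α β γ : Set V) : Prop :=
  α ∪ β ∪ γ = Set.univ ∧ Disjoint α β ∧ Disjoint β γ ∧ Disjoint α γ ∧
    A ⊆ α ∧ B ⊆ β ∧ C ⊆ γ

/-- The area of a triway cut with tensions `(t_{A:B}, t_{B:C}, t_{C:A})`. -/
def triArea (G : SimpleGraph V) (w : Sym2 V → ℝ) (tAB tBC tCA : ℝ)
    (α β γ : Set V) : ℝ :=
  tAB * wsum w (mu2 G α β) + tBC * wsum w (mu2 G β γ) + tCA * wsum w (mu2 G γ α)

/-- The minimal triway cut area `𝒜_t(A:B:C)`. -/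
def triCut (G : SimpleGraph V) (w : Sym2 V → ℝ) (tAB tBC tCA : ℝ)
    (A B C : Set V) : ℝ :=
  sInf {a | ∃ α β γ : Set V, IsTriway A B C α β γ ∧ a = triArea G w tAB tBC tCA α β γ}

/-- Boundary data: `∂ = A ⊔ B ⊔ C` (pairwise disjoint). -/
def Bdy (A B C : Set V) : Prop := Disjoint A B ∧ Disjoint A C ∧ Disjoint B C

/-! ### The permutation optimization `R` -/

/-- The symmetric edge function induced by the Cayley distance of a vertex
configuration of permutations. -/
def permE {ι : Type*} [Fintype ι] (g : V → Equiv.Perm ι) : Sym2 V → ℝ :=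
  Sym2.lift ⟨fun x y => (cayley (g x) (g y) : ℝ),
    fun x y => congrArg Int.cast (cayley_comm (g x) (g y))⟩

/-- The free energy `R(g) = Σ_e w(e) d(g(x),g(y))`. -/
def Renergy {ι : Type*} [Fintype ι] (G : SimpleGraph V) (w : Sym2 V → ℝ)
    (g : V → Equiv.Perm ι) : ℝ :=
  wsum (fun e => w e * permE g e) G.edgeSet

/-- The optimal value `R` of the permutation optimization. -/
def Rval {ι : Type*} [Fintype ι] (G : SimpleGraph V) (w : Sym2 V → ℝ)
    (A B C : Set V) (g₁ g₂ : Equiv.Perm ι) : ℝ :=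
  sInf {a | ∃ g : V → Equiv.Perm ι,
    (∀ v ∈ A, g v = g₁) ∧ (∀ v ∈ B, g v = g₂) ∧ (∀ v ∈ C, g v = 1) ∧
    a = Renergy G w g}

/-! ### The set-partition optimization `Q` -/

/-- The symmetric integer edge function induced by the partition distance of a vertex
configuration of partitions. -/
def partEZ {κ : Type*} (q : V → Setoid κ) : Sym2 V → ℤ :=
  Sym2.lift ⟨fun x y => pdist (q x) (q y), fun x y => pdist_comm (q x) (q y)⟩

/-- The free energy `Q(q) = Σ_e w(e) d(q(x),q(y))`. -/
def Qenergy {κ : Type*} (G : SimpleGraph V) (w : Sym2 V → ℝ)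
    (q : V → Setoid κ) : ℝ :=
  wsum (fun e => w e * (partEZ q e : ℝ)) G.edgeSet

/-- The optimal value `Q` of the set-partition optimization. -/
def Qval {κ : Type*} (G : SimpleGraph V) (w : Sym2 V → ℝ)
    (A B C : Set V) (q₁ q₂ : Setoid κ) : ℝ :=
  sInf {a | ∃ q : V → Setoid κ,
    (∀ v ∈ A, q v = q₁) ∧ (∀ v ∈ B, q v = q₂) ∧ (∀ v ∈ C, q v = ⊥) ∧
    a = Qenergy G w q}

/-! ### The Boolean optimization `B` -/

/-- The Hamming distance between two bit strings. -/
def ham {κ : Type*} [Fintype κ] (b₁ b₂ : κ → Bool) : ℤ :=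
  ∑ k : κ, if b₁ k = b₂ k then 0 else 1

/-- The bit string `b(q)` of a partition: `false` exactly at singlets. -/
def bvec {κ : Type*} (p : Setoid κ) : κ → Bool :=
  fun u => if IsSinglet p u then false else true

/-- Feasibility of `r` for the Boolean program at configuration `b`. -/
def Bfeas {κ : Type*} [Fintype κ] (G : SimpleGraph V) (A B : Set V) (n : ℕ)
    (b : V → κ → Bool) (r : Sym2 V → ℕ) : Prop :=
  (∀ x ∈ A, ∀ y ∈ B, ∀ L : G.Walk x y,
    2 ∣ wkSum (fun e => (r e : ℤ)) L ∧
    wkSum (fun e => (r e : ℤ)) L ≥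
      2 * ((n : ℤ) - if ∀ v ∈ L.support, ∀ k, b v k = true then 1 else 0)) ∧
  (∀ x y : V, G.Adj x y → (r s(x, y) : ℤ) ≥ ⌈(ham (b x) (b y) : ℚ) / 2⌉)

/-- The inner Boolean optimum `B(b)` at a fixed Boolean configuration `b`. -/
def BvalAt {κ : Type*} [Fintype κ] (G : SimpleGraph V) (w : Sym2 V → ℝ)
    (A B : Set V) (n : ℕ) (b : V → κ → Bool) : ℝ :=
  sInf {a | ∃ r : Sym2 V → ℕ, Bfeas G A B n b r ∧
    a = wsum (fun e => w e * (r e : ℝ)) G.edgeSet}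

/-- The optimal value `B` of the Boolean optimization. -/
def Bval (κ : Type*) [Fintype κ] (G : SimpleGraph V) (w : Sym2 V → ℝ)
    (A B C : Set V) (n : ℕ) : ℝ :=
  sInf {a | ∃ b : V → κ → Bool,
    (∀ v ∈ A ∪ B, ∀ k, b v k = true) ∧ (∀ v ∈ C, ∀ k, b v k = false) ∧
    ∃ r : Sym2 V → ℕ, Bfeas G A B n b r ∧
      a = wsum (fun e => w e * (r e : ℝ)) G.edgeSet}

/-! ### The integer program `I` -/

/-- Feasibility of `(ρ,σ)` for the integer program. -/
def IPfeas (G : SimpleGraph V) (A B C : Set V) (n : ℕ) (ρ σ : Sym2 V → ℕ) : Prop :=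
  (∀ x ∈ A, ∀ y ∈ B, ∀ L : G.Walk x y,
    2 ∣ wkSum (fun e => (σ e : ℤ) + (ρ e : ℤ)) L ∧
    wkSum (fun e => (σ e : ℤ) + (ρ e : ℤ)) L ≥
      2 * ((n : ℤ) - if wkSum (fun e => (ρ e : ℤ)) L = 0 then 1 else 0)) ∧
  (∀ x ∈ A ∪ B, ∀ y ∈ C, ∀ L : G.Walk x y,
    wkSum (fun e => (ρ e : ℤ)) L ≥ (n : ℤ))

/-- The objective of the integer program. -/
def IPobj (G : SimpleGraph V) (w : Sym2 V → ℝ) (ρ σ : Sym2 V → ℕ) : ℝ :=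
  wsum (fun e => w e * ((σ e : ℝ) + (ρ e : ℝ))) G.edgeSet

/-- The optimal value `I` of the integer program. -/
def Ival (G : SimpleGraph V) (w : Sym2 V → ℝ) (A B C : Set V) (n : ℕ) : ℝ :=
  sInf {a | ∃ ρ σ : Sym2 V → ℕ, IPfeas G A B C n ρ σ ∧ a = IPobj G w ρ σ}

/-! ### The ℓ-intersecting cut problem `M` -/

/-- Feasibility for the `ℓ`-intersecting cut problem with boundary sets
`Γ₀, …, Γ_ℓ` and `C`, for a half-integer valued `ϱ`. -/
def Mfeas (G : SimpleGraph V) (Γ : ℕ → Set V) (ℓ : ℕ) (C : Set V)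
    (ϱ : Sym2 V → ℚ) : Prop :=
  (∀ e, ∃ j : ℕ, ϱ e = (j : ℚ) / 2) ∧
  (∀ k k' : ℕ, k ≤ ℓ → k' ≤ ℓ → ∀ x ∈ Γ k, ∀ y ∈ Γ k', ∀ L : G.Walk x y,
    ∃ j : ℕ, wkSum ϱ L = |(k : ℚ) - (k' : ℚ)| + (j : ℚ)) ∧
  (∀ k : ℕ, k ≤ ℓ → ∀ x ∈ Γ k, ∀ y ∈ C, ∀ L : G.Walk x y,
    ∃ j : ℕ, wkSum ϱ L = (ℓ : ℚ) / 2 + (j : ℚ))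

/-- The objective of the `ℓ`-intersecting cut problem. -/
def Mobj (G : SimpleGraph V) (w : Sym2 V → ℝ) (ϱ : Sym2 V → ℚ) : ℝ :=
  wsum (fun e => w e * (ϱ e : ℝ)) G.edgeSet

/-- The optimal value `M` of the `ℓ`-intersecting cut problem. -/
def Mval (G : SimpleGraph V) (w : Sym2 V → ℝ) (Γ : ℕ → Set V) (ℓ : ℕ)
    (C : Set V) : ℝ :=
  sInf {a | ∃ ϱ : Sym2 V → ℚ, Mfeas G Γ ℓ C ϱ ∧ a = Mobj G w ϱ}

/-- The complementary reduced graph `G^c`: the edges of `G` not lying entirely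
inside `V'`. -/
def reducedGraph (G : SimpleGraph V) (V' : Set V) : SimpleGraph V where
  Adj x y := G.Adj x y ∧ ¬ (x ∈ V' ∧ y ∈ V')
  symm := by
    refine ⟨?_⟩
    intro x y h
    exact ⟨h.1.symm, fun hc => h.2 ⟨hc.2, hc.1⟩⟩
  loopless := by
    refine ⟨?_⟩
    intro x h
    exact G.loopless.irrefl x h.1

end RTN

/-!
(i) For an integral feasible `ρ`, let `P` be the set of vertices joined to `B` by a walk of
`ρ`-length `0`, and `Q` the same for `C`. Then `(P ∪ Q)ᶜ, P, Q \ P` is a triway cut, every edge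
between two of its parts has `ρ ≥ 1`, and so its area is at most the cost of `ρ`. Conversely, the
indicator of the three interfaces of a triway cut is feasible and costs exactly its area.

(ii) If `r_A, r_B, r_C` are minimal cuts for `A : B ∪ C`, `B : A ∪ C`, `C : A ∪ B`, every pair of
boundary sets is separated by two of them, so half the sum of their indicators is feasible. For
the reverse inequality let `d_X = min(1/2, dist_ρ(X, ·))`. For `t ∈ (0, 1/2)` the sublevel set
`{d_X ≤ t}` is a cut for `X` against the other boundary sets, so integrating over `t` (coarea)
bounds `½ Σ_X 𝒜(X : rest)` by `Σ_{uv} w(uv) Σ_X |d_X(u) - d_X(v)|`. Since `ρ` separates the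
boundary sets, no vertex is within `1/2` of two of them, and an edge `uv` with
`d_X(u), d_Y(v) < 1/2` has `d_X(u) + ρ(uv) + d_Y(v) ≥ 1`; together with
`|d_X(u) - d_X(v)| ≤ ρ(uv)` this gives `Σ_X |d_X(u) - d_X(v)| ≤ ρ(uv)`.
-/

namespace RTN

variable {V : Type*}

section Walks

variable {β : Type*} {G : SimpleGraph V} {x y z : V}

@[simp]
lemma wkSum_nil [AddCommMonoid β] (f : Sym2 V → β) : wkSum f (.nil : G.Walk x x) = 0 := by
  simp [wkSum]

lemma wkSum_cons [AddCommMonoid β] (f : Sym2 V → β) (h : G.Adj x y) (p : G.Walk y z) :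
    wkSum f (.cons h p) = f s(x, y) + wkSum f p := by
  simp [wkSum]

lemma wkSum_append [AddCommMonoid β] (f : Sym2 V → β) (p : G.Walk x y) (q : G.Walk y z) :
    wkSum f (p.append q) = wkSum f p + wkSum f q := by
  simp [wkSum]

lemma wkSum_reverse [AddCommMonoid β] (f : Sym2 V → β) (p : G.Walk x y) :
    wkSum f p.reverse = wkSum f p := by
  simp [wkSum, List.sum_reverse]

lemma wkSum_concat [AddCommMonoid β] (f : Sym2 V → β) (p : G.Walk x y) (h : G.Adj y z) :
    wkSum f (p.concat h) = wkSum f p + f s(y, z) := by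
  simp [wkSum]

lemma wkSum_add [AddCommMonoid β] (f g : Sym2 V → β) (p : G.Walk x y) :
    wkSum (fun e => f e + g e) p = wkSum f p + wkSum g p :=
  List.sum_map_add

lemma wkSum_const_mul [NonUnitalNonAssocSemiring β] (c : β) (f : Sym2 V → β)
    (p : G.Walk x y) : wkSum (fun e => c * f e) p = c * wkSum f p :=
  List.sum_map_mul_left _ _ _

variable [AddCommMonoid β] [PartialOrder β] [IsOrderedAddMonoid β] {f : Sym2 V → β}

lemma wkSum_nonneg (hf : ∀ e, 0 ≤ f e) (p : G.Walk x y) : 0 ≤ wkSum f p :=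
  List.sum_nonneg (by simpa using fun e _ => hf e)

lemma le_wkSum_of_mem_edges (hf : ∀ e, 0 ≤ f e) (p : G.Walk x y) {e : Sym2 V}
    (he : e ∈ p.edges) : f e ≤ wkSum f p :=
  List.single_le_sum (by simpa using fun e _ => hf e) _ (List.mem_map_of_mem he)

end Walks

def Separates {β : Type*} [AddCommMonoid β] [LE β] [One β] (G : SimpleGraph V)
    (f : Sym2 V → β) (X Y : Set V) : Prop :=
  ∀ x ∈ X, ∀ y ∈ Y, ∀ L : G.Walk x y, 1 ≤ wkSum f L

section Separates

variable {β : Type*} [AddCommMonoid β] [LE β] [One β] {G : SimpleGraph V} {f : Sym2 V → β}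
  {X Y Z : Set V}

lemma Separates.symm (h : Separates G f X Y) : Separates G f Y X := fun y hy x hx L => by
  simpa [wkSum_reverse] using h x hx y hy L.reverse

lemma Separates.union_right (hY : Separates G f X Y) (hZ : Separates G f X Z) :
    Separates G f X (Y ∪ Z) := by
  rintro x hx y (hy | hy)
  exacts [hY x hx y hy, hZ x hx y hy]

end Separates

section Cuts

variable {G : SimpleGraph V} {r r₁ r₂ r₃ r₄ : Set V}

lemma mu2_comm : mu2 G r₁ r₂ = mu2 G r₂ r₁ := by
  ext e
  constructor <;>
  · rintro ⟨he, x, y, rfl, hx, hy⟩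
    exact ⟨he, y, x, Sym2.eq_swap, hy, hx⟩

lemma mu2_union_right : mu2 G r₁ (r₂ ∪ r₃) = mu2 G r₁ r₂ ∪ mu2 G r₁ r₃ := by
  ext e
  constructor
  · rintro ⟨he, x, y, rfl, hx, hy | hy⟩
    exacts [Or.inl ⟨he, x, y, rfl, hx, hy⟩, Or.inr ⟨he, x, y, rfl, hx, hy⟩]
  · rintro (⟨he, x, y, rfl, hx, hy⟩ | ⟨he, x, y, rfl, hx, hy⟩)
    exacts [⟨he, x, y, rfl, hx, Or.inl hy⟩, ⟨he, x, y, rfl, hx, Or.inr hy⟩]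

lemma mu2_subset_edgeSet : mu2 G r₁ r₂ ⊆ G.edgeSet := fun _ he => he.1

lemma disjoint_mu2 (h₁₃ : Disjoint r₁ r₃) (h₁₄ : Disjoint r₁ r₄) :
    Disjoint (mu2 G r₁ r₂) (mu2 G r₃ r₄) := by
  refine Set.disjoint_left.mpr ?_
  rintro e ⟨-, x, y, rfl, hx, -⟩ ⟨-, x', y', he, hx', hy'⟩
  rcases Sym2.eq_iff.mp he with ⟨rfl, -⟩ | ⟨rfl, -⟩
  exacts [Set.disjoint_left.mp h₁₃ hx hx', Set.disjoint_left.mp h₁₄ hx hy']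

lemma exists_mem_edges_mem_mu {x y : V} (hxy : ¬(x ∈ r ↔ y ∈ r)) (L : G.Walk x y) :
    ∃ e ∈ L.edges, e ∈ mu G r := by
  induction L with
  | nil => exact absurd Iff.rfl hxy
  | @cons a b c hab p ih =>
    by_cases hb : a ∈ r ↔ b ∈ r
    · obtain ⟨e, he, hmu⟩ := ih (by tauto)
      exact ⟨e, List.mem_cons_of_mem _ he, hmu⟩
    · refine ⟨s(a, b), List.mem_cons_self, hab, ?_⟩
      by_cases ha : a ∈ r
      · exact ⟨a, b, rfl, ha, by tauto⟩
      · exact ⟨b, a, Sym2.eq_swap, by tauto, ha⟩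

lemma one_le_wkSum_of_one_le_on_mu {β : Type*} [AddCommMonoid β] [PartialOrder β]
    [IsOrderedAddMonoid β] [One β] {f : Sym2 V → β} (hf₀ : ∀ e, 0 ≤ f e)
    (hf₁ : ∀ e ∈ mu G r, 1 ≤ f e) {x y : V} (hxy : ¬(x ∈ r ↔ y ∈ r)) (L : G.Walk x y) :
    1 ≤ wkSum f L := by
  obtain ⟨e, he, hmu⟩ := exists_mem_edges_mem_mu hxy L
  exact (hf₁ e hmu).trans (le_wkSum_of_mem_edges hf₀ L he)

end Cuts

section WeightedSums

variable [Fintype V] {f g : Sym2 V → ℝ} {S T : Set (Sym2 V)}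

lemma wsum_eq_sum_indicator : wsum f S = ∑ e, S.indicator f e := by
  simp [wsum, Finset.sum_filter, Set.indicator_apply]

lemma wsum_nonneg (hf : ∀ e, 0 ≤ f e) : 0 ≤ wsum f S :=
  Finset.sum_nonneg fun e _ => hf e

lemma wsum_add : wsum (fun e => f e + g e) S = wsum f S + wsum g S :=
  Finset.sum_add_distrib

lemma wsum_const_mul (c : ℝ) : wsum (fun e => c * f e) S = c * wsum f S :=
  (Finset.mul_sum _ _ _).symm

lemma wsum_le_wsum (h : ∀ e ∈ S, f e ≤ g e) : wsum f S ≤ wsum g S :=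
  Finset.sum_le_sum fun e he => h e (Finset.mem_filter.mp he).2

lemma wsum_union (hST : Disjoint S T) : wsum f (S ∪ T) = wsum f S + wsum f T := by
  simp only [wsum_eq_sum_indicator, Set.indicator_union_of_disjoint hST, Finset.sum_add_distrib]

lemma wsum_mul_indicator (hST : S ⊆ T) :
    wsum (fun e => f e * S.indicator 1 e) T = wsum f S := by
  simp only [wsum_eq_sum_indicator]
  refine Finset.sum_congr rfl fun e _ => ?_
  by_cases he : e ∈ S
  · simp [he, hST he]
  · by_cases he' : e ∈ T <;> simp [he, he']

lemma wsum_le_wsum_mul (hf : ∀ e, 0 ≤ f e) (hST : S ⊆ T) (hg₀ : ∀ e, 0 ≤ g e)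
    (hg₁ : ∀ e ∈ S, 1 ≤ g e) : wsum f S ≤ wsum (fun e => f e * g e) T := by
  simp only [wsum_eq_sum_indicator]
  refine Finset.sum_le_sum fun e _ => ?_
  by_cases he : e ∈ S
  · simpa [he, hST he] using le_mul_of_one_le_right (hf e) (hg₁ e he)
  · by_cases he' : e ∈ T <;> simp [he, he', mul_nonneg (hf e) (hg₀ e)]

end WeightedSums

section ZeroReach

variable {β : Type*} [AddCommMonoid β] {G : SimpleGraph V} {f : Sym2 V → β} {X Y : Set V}
  {u v : V}

def zeroReach (G : SimpleGraph V) (f : Sym2 V → β) (X : Set V) : Set V :=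
  {v | ∃ x ∈ X, ∃ L : G.Walk x v, wkSum f L = 0}

lemma subset_zeroReach : X ⊆ zeroReach G f X :=
  fun x hx => ⟨x, hx, .nil, wkSum_nil f⟩

lemma mem_zeroReach_of_adj (h : G.Adj u v) (hf : f s(u, v) = 0) (hu : u ∈ zeroReach G f X) :
    v ∈ zeroReach G f X := by
  obtain ⟨x, hx, L, hL⟩ := hu
  exact ⟨x, hx, L.concat h, by rw [wkSum_concat, hL, hf, add_zero]⟩

lemma mem_zeroReach_iff_of_adj (h : G.Adj u v) (hf : f s(u, v) = 0) :
    u ∈ zeroReach G f X ↔ v ∈ zeroReach G f X :=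
  ⟨mem_zeroReach_of_adj h hf, mem_zeroReach_of_adj h.symm (by rwa [Sym2.eq_swap])⟩

lemma disjoint_zeroReach [PartialOrder β] [One β] [ZeroLEOneClass β] [NeZero (1 : β)]
    (h : Separates G f X Y) : Disjoint (zeroReach G f X) Y :=
  Set.disjoint_left.mpr fun v ⟨x, hx, L, hL⟩ hv =>
    (zero_lt_one (α := β)).not_ge (hL ▸ h x hx v hv L)

end ZeroReach

def triSurface (G : SimpleGraph V) (α β γ : Set V) : Set (Sym2 V) :=
  mu2 G α β ∪ mu2 G β γ ∪ mu2 G γ α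

section Triway

variable {G : SimpleGraph V} {A B C α β γ : Set V}

lemma triSurface_subset_edgeSet : triSurface G α β γ ⊆ G.edgeSet :=
  Set.union_subset (Set.union_subset mu2_subset_edgeSet mu2_subset_edgeSet) mu2_subset_edgeSet

lemma mu_subset_mu2 {r s : Set V} (h : rᶜ ⊆ s) : mu G r ⊆ mu2 G r s :=
  fun _ ⟨he, x, y, hxy, hx, hy⟩ => ⟨he, x, y, hxy, hx, h hy⟩

lemma IsTriway.compl_subset (h : IsTriway A B C α β γ) : αᶜ ⊆ β ∪ γ ∧ βᶜ ⊆ α ∪ γ := by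
  have hv : ∀ v, v ∈ α ∨ v ∈ β ∨ v ∈ γ := fun v => by
    simpa [or_assoc] using Set.eq_univ_iff_forall.mp h.1 v
  exact ⟨fun v hv' => by have := hv v; tauto, fun v hv' => by have := hv v; tauto⟩

lemma IsTriway.mu_subset_triSurface (h : IsTriway A B C α β γ) :
    mu G α ⊆ triSurface G α β γ ∧ mu G β ⊆ triSurface G α β γ := by
  constructor
  · refine (mu_subset_mu2 h.compl_subset.1).trans ?_
    rw [mu2_union_right, mu2_comm (r₁ := α) (r₂ := γ), triSurface]
    exact Set.union_subset (Set.subset_union_left.trans Set.subset_union_left)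
      Set.subset_union_right
  · refine (mu_subset_mu2 h.compl_subset.2).trans ?_
    rw [mu2_union_right, mu2_comm (r₁ := β) (r₂ := α), triSurface]
    exact Set.subset_union_left

lemma isTriway_of_subset {P Q : Set V} (hB : B ⊆ P) (hC : C ⊆ Q) (hPA : Disjoint P A)
    (hQA : Disjoint Q A) (hPC : Disjoint P C) : IsTriway A B C (P ∪ Q)ᶜ P (Q \ P) := by
  refine ⟨Set.eq_univ_of_forall fun v => ?_, ?_, ?_, ?_, ?_, hB, ?_⟩
  · by_cases hP : v ∈ P <;> by_cases hQ : v ∈ Q <;> simp [hP, hQ]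
  · exact Set.disjoint_left.mpr fun v hv hP => hv (Or.inl hP)
  · exact Set.disjoint_left.mpr fun v hP hQ => hQ.2 hP
  · exact Set.disjoint_left.mpr fun v hv hQ => hv (Or.inr hQ.1)
  · rintro a ha (hP | hQ)
    exacts [Set.disjoint_left.mp hPA hP ha, Set.disjoint_left.mp hQA hQ ha]
  · exact fun c hc => ⟨hC hc, fun hP => Set.disjoint_left.mp hPC hP hc⟩

variable [Fintype V] {w : Sym2 V → ℝ}

lemma IsTriway.triArea_one_eq_wsum (h : IsTriway A B C α β γ) :
    triArea G w 1 1 1 α β γ = wsum w (triSurface G α β γ) := by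
  obtain ⟨-, hαβ, hβγ, hαγ, -⟩ := h
  have h₁ : Disjoint (mu2 G α β) (mu2 G β γ) := disjoint_mu2 hαβ hαγ
  have h₂ : Disjoint (mu2 G α β ∪ mu2 G β γ) (mu2 G γ α) := by
    refine Set.disjoint_union_left.mpr ⟨?_, disjoint_mu2 hβγ hαβ.symm⟩
    rw [mu2_comm]
    exact disjoint_mu2 hβγ hαβ.symm
  rw [triSurface, wsum_union h₂, wsum_union h₁, triArea]
  ring

end Triway

def ipValues [Fintype V] (G : SimpleGraph V) (w : Sym2 V → ℝ) (A B C : Set V) : Set ℝ :=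
  {a | ∃ ρ : Sym2 V → ℕ,
    (Separates G (fun e => (ρ e : ℤ)) A B ∧ Separates G (fun e => (ρ e : ℤ)) A C ∧
      Separates G (fun e => (ρ e : ℤ)) B C) ∧
    a = wsum (fun e => w e * (ρ e : ℝ)) G.edgeSet}

section IntegerProgram

variable [Fintype V] {G : SimpleGraph V} {w : Sym2 V → ℝ} {A B C α β γ : Set V}

lemma triArea_mem_ipValues (h : IsTriway A B C α β γ) :
    triArea G w 1 1 1 α β γ ∈ ipValues G w A B C := by
  set S := triSurface G α β γ
  have hS₀ : ∀ e, (0 : ℤ) ≤ (S.indicator 1 e : ℕ) := fun e => Int.natCast_nonneg _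
  have hS₁ : ∀ r, mu G r ⊆ S → ∀ e ∈ mu G r, (1 : ℤ) ≤ (S.indicator 1 e : ℕ) :=
    fun r hr e he => by simp [Set.indicator_of_mem (hr he)]
  have hcast : ∀ e, ((S.indicator 1 e : ℕ) : ℝ) = S.indicator 1 e := fun e => by
    by_cases he : e ∈ S <;> simp [he]
  obtain ⟨hα, hβ⟩ := h.mu_subset_triSurface (G := G)
  obtain ⟨-, hαβ, hβγ, hαγ, hA, hB, hC⟩ := id h
  refine ⟨S.indicator 1, ⟨?_, ?_, ?_⟩, ?_⟩
  · exact fun x hx y hy => one_le_wkSum_of_one_le_on_mu hS₀ (hS₁ _ hα)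
      fun hxy => Set.disjoint_left.mp hαβ (hxy.1 (hA hx)) (hB hy)
  · exact fun x hx y hy => one_le_wkSum_of_one_le_on_mu hS₀ (hS₁ _ hα)
      fun hxy => Set.disjoint_left.mp hαγ (hxy.1 (hA hx)) (hC hy)
  · exact fun x hx y hy => one_le_wkSum_of_one_le_on_mu hS₀ (hS₁ _ hβ)
      fun hxy => Set.disjoint_left.mp hβγ (hxy.1 (hB hx)) (hC hy)
  · simp only [hcast]
    rw [wsum_mul_indicator triSurface_subset_edgeSet, h.triArea_one_eq_wsum]

lemma exists_triArea_le_of_mem_ipValues (hw : ∀ e, 0 ≤ w e) {a : ℝ}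
    (ha : a ∈ ipValues G w A B C) :
    ∃ α β γ, IsTriway A B C α β γ ∧ triArea G w 1 1 1 α β γ ≤ a := by
  obtain ⟨ρ, ⟨hAB, hAC, hBC⟩, rfl⟩ := ha
  set P := zeroReach G (fun e => (ρ e : ℤ)) B
  set Q := zeroReach G (fun e => (ρ e : ℤ)) C
  have htri : IsTriway A B C (P ∪ Q)ᶜ P (Q \ P) :=
    isTriway_of_subset subset_zeroReach subset_zeroReach (disjoint_zeroReach hAB.symm)
      (disjoint_zeroReach hAC.symm) (disjoint_zeroReach hBC)
  have hiff : ∀ X {x y}, s(x, y) ∈ G.edgeSet → ρ s(x, y) = 0 →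
      (x ∈ zeroReach G (fun e => (ρ e : ℤ)) X ↔ y ∈ zeroReach G (fun e => (ρ e : ℤ)) X) :=
    fun _ _ _ he h0 => mem_zeroReach_iff_of_adj he (by simp [h0])
  have hcross : ∀ e ∈ triSurface G (P ∪ Q)ᶜ P (Q \ P), ρ e ≠ 0 := by
    rintro e ((⟨he, x, y, rfl, hx, hy⟩ | ⟨he, x, y, rfl, hx, hy⟩) | ⟨he, x, y, rfl, hx, hy⟩) h0
    · exact hx (Or.inl ((hiff B he h0).2 hy))
    · exact hy.2 ((hiff B he h0).1 hx)
    · exact hy (Or.inr ((hiff C he h0).1 hx.1))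
  refine ⟨_, _, _, htri, ?_⟩
  rw [htri.triArea_one_eq_wsum]
  exact wsum_le_wsum_mul hw triSurface_subset_edgeSet (fun e => Nat.cast_nonneg _)
    fun e he => Nat.one_le_cast.2 (Nat.one_le_iff_ne_zero.2 (hcross e he))

lemma sInf_ipValues (hw : ∀ e, 0 ≤ w e) :
    sInf (ipValues G w A B C) = triCut G w 1 1 1 A B C :=
  csInf_eq_csInf_of_forall_exists_le
    (fun _ ha =>
      let ⟨α, β, γ, h, hle⟩ := exists_triArea_le_of_mem_ipValues hw ha
      ⟨_, ⟨α, β, γ, h, rfl⟩, hle⟩)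
    (fun _ ⟨_, _, _, h, hb⟩ => ⟨_, hb ▸ triArea_mem_ipValues h, le_rfl⟩)

end IntegerProgram

def lpValues [Fintype V] (G : SimpleGraph V) (w : Sym2 V → ℝ) (A B C : Set V) : Set ℝ :=
  {a | ∃ ρ : Sym2 V → ℝ, (∀ e, 0 ≤ ρ e) ∧
    (Separates G ρ A B ∧ Separates G ρ A C ∧ Separates G ρ B C) ∧
    a = wsum (fun e => w e * ρ e) G.edgeSet}

section MinCut

variable {G : SimpleGraph V} {X Y r : Set V}

lemma mu_subset_edgeSet : mu G r ⊆ G.edgeSet := fun _ he => he.1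

lemma IsCut.not_iff {x y : V} (hr : IsCut X Y r) (hx : x ∈ X) (hy : y ∈ Y) :
    ¬(x ∈ r ↔ y ∈ r) :=
  fun h => hr.2 hy (h.1 (hr.1 hx))

variable [Fintype V] {w : Sym2 V → ℝ}

lemma minCut_le (hw : ∀ e, 0 ≤ w e) (hr : IsCut X Y r) : minCut G w X Y ≤ wsum w (mu G r) :=
  csInf_le ⟨0, fun _ ⟨_, _, ha⟩ => ha ▸ wsum_nonneg hw⟩ ⟨r, hr, rfl⟩

lemma exists_minCut_eq (w : Sym2 V → ℝ) (hXY : Disjoint X Y) :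
    ∃ r, IsCut X Y r ∧ minCut G w X Y = wsum w (mu G r) := by
  have hfin : {a | ∃ r, IsCut X Y r ∧ a = wsum w (mu G r)}.Finite :=
    (Set.finite_range fun r => wsum w (mu G r)).subset fun _ ⟨r, _, ha⟩ => ⟨r, ha.symm⟩
  have hne : {a | ∃ r, IsCut X Y r ∧ a = wsum w (mu G r)}.Nonempty :=
    ⟨_, Yᶜ, ⟨fun _ hx hy => Set.disjoint_left.mp hXY hx hy, fun _ hy h => h hy⟩, rfl⟩
  exact hne.csInf_mem hfin

end MinCut

section LinearProgram

variable [Fintype V] {G : SimpleGraph V} {w : Sym2 V → ℝ} {A B C : Set V}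

lemma half_sum_minCut_mem_lpValues (hAB : Disjoint A B) (hAC : Disjoint A C)
    (hBC : Disjoint B C) :
    (minCut G w A (B ∪ C) + minCut G w B (A ∪ C) + minCut G w C (A ∪ B)) / 2 ∈
      lpValues G w A B C := by
  obtain ⟨rA, hA, hmA⟩ := exists_minCut_eq (G := G) w (Set.disjoint_union_right.2 ⟨hAB, hAC⟩)
  obtain ⟨rB, hB, hmB⟩ :=
    exists_minCut_eq (G := G) w (Set.disjoint_union_right.2 ⟨hAB.symm, hBC⟩)
  obtain ⟨rC, hC, hmC⟩ :=
    exists_minCut_eq (G := G) w (Set.disjoint_union_right.2 ⟨hAC.symm, hBC.symm⟩)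
  let ι : Set V → Sym2 V → ℝ := fun r => (mu G r).indicator 1
  have hι₀ : ∀ r e, 0 ≤ ι r e := fun r e => Set.indicator_nonneg (fun _ _ => zero_le_one) e
  have hι₁ : ∀ r {x y : V} (L : G.Walk x y), ¬(x ∈ r ↔ y ∈ r) → 1 ≤ wkSum (ι r) L :=
    fun r _ _ L h => one_le_wkSum_of_one_le_on_mu (hι₀ r) (fun e he => by simp [ι, he]) h L
  -- each pair of boundary sets is separated by two of the three cuts
  refine ⟨fun e => 2⁻¹ * (ι rA e + ι rB e + ι rC e),
    fun e => by have := hι₀ rA e; have := hι₀ rB e; have := hι₀ rC e; positivity,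
    ⟨fun x hx y hy L => ?_, fun x hx y hy L => ?_, fun x hx y hy L => ?_⟩, ?_⟩
  · have h₁ := hι₁ rA L (hA.not_iff hx (Or.inl hy))
    have h₂ := hι₁ rB L fun h => hB.not_iff hy (Or.inl hx) h.symm
    have h₃ := wkSum_nonneg (hι₀ rC) L
    rw [wkSum_const_mul, wkSum_add, wkSum_add]
    linarith
  · have h₁ := hι₁ rA L (hA.not_iff hx (Or.inr hy))
    have h₂ := hι₁ rC L fun h => hC.not_iff hy (Or.inl hx) h.symm
    have h₃ := wkSum_nonneg (hι₀ rB) L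
    rw [wkSum_const_mul, wkSum_add, wkSum_add]
    linarith
  · have h₁ := hι₁ rB L (hB.not_iff hx (Or.inr hy))
    have h₂ := hι₁ rC L fun h => hC.not_iff hy (Or.inr hx) h.symm
    have h₃ := wkSum_nonneg (hι₀ rA) L
    rw [wkSum_const_mul, wkSum_add, wkSum_add]
    linarith
  · have hmul : ∀ e, w e * (2⁻¹ * (ι rA e + ι rB e + ι rC e)) =
        2⁻¹ * (w e * ι rA e + w e * ι rB e + w e * ι rC e) := fun e => by ring
    simp only [hmul, wsum_const_mul, wsum_add, ι, wsum_mul_indicator mu_subset_edgeSet, hmA, hmB,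
      hmC]
    ring

end LinearProgram

lemma sum_abs_sub_le_of_exclusive {ι : Type*} [Fintype ι] {x y : ι → ℝ} {c r : ℝ} (hr : 0 ≤ r)
    (hx : ∀ i, x i ≤ c) (hy : ∀ i, y i ≤ c) (hxy : ∀ i, |x i - y i| ≤ r)
    (hx₁ : ∀ i j, x i < c → x j < c → i = j) (hy₁ : ∀ i j, y i < c → y j < c → i = j)
    (hcross : ∀ i j, i ≠ j → x i < c → y j < c → 2 * c ≤ x i + r + y j) :
    ∑ i, |x i - y i| ≤ r := by
  classical
  by_cases h : ∃ i j, i ≠ j ∧ x i < c ∧ y j < c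
  · obtain ⟨i, j, hij, hi, hj⟩ := h
    have hxi : ∀ k ≠ i, c - x k = 0 := fun k hk => by
      by_contra h
      exact hk (hx₁ k i (lt_of_le_of_ne (hx k) fun h' => h (by rw [h', sub_self])) hi)
    have hyj : ∀ k ≠ j, c - y k = 0 := fun k hk => by
      by_contra h
      exact hk (hy₁ k j (lt_of_le_of_ne (hy k) fun h' => h (by rw [h', sub_self])) hj)
    calc ∑ k, |x k - y k| ≤ ∑ k, ((c - x k) + (c - y k)) :=
          Finset.sum_le_sum fun k _ =>
            abs_sub_le_iff.2 ⟨by linarith [hx k, hy k], by linarith [hx k, hy k]⟩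
      _ = (c - x i) + (c - y j) := by
          rw [Finset.sum_add_distrib, Finset.sum_eq_single i (fun k _ hk => hxi k hk) (by simp),
            Finset.sum_eq_single j (fun k _ hk => hyj k hk) (by simp)]
      _ ≤ r := by linarith [hcross i j hij hi hj]
  · simp only [not_exists, not_and, not_lt] at h
    set S := Finset.univ.filter fun i => x i < c ∨ y i < c
    have hS : S.card ≤ 1 := Finset.card_le_one.2 fun i hi j hj => by
      simp only [S, Finset.mem_filter, Finset.mem_univ, true_and] at hi hj
      rcases hi with hi | hi <;> rcases hj with hj | hj
      · exact hx₁ i j hi hj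
      · by_contra hij
        exact (h i j hij hi).not_gt hj
      · by_contra hij
        exact (h j i (Ne.symm hij) hj).not_gt hi
      · exact hy₁ i j hi hj
    have hzero : ∀ i ∉ S, |x i - y i| = 0 := fun i hi => by
      simp only [S, Finset.mem_filter, Finset.mem_univ, true_and, not_or, not_lt] at hi
      rw [le_antisymm (hx i) hi.1, le_antisymm (hy i) hi.2, sub_self, abs_zero]
    calc ∑ i, |x i - y i| = ∑ i ∈ S, |x i - y i| :=
          (Finset.sum_subset (Finset.subset_univ S) fun i _ hi => hzero i hi).symm
      _ ≤ S.card • r := Finset.sum_le_card_nsmul _ _ _ fun i _ => hxy i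
      _ ≤ r := by
          rw [nsmul_eq_mul]
          exact mul_le_of_le_one_left hr (by exact_mod_cast hS)

def capDist (G : SimpleGraph V) (ρ : Sym2 V → ℝ) (X : Set V) (v : V) : ℝ :=
  sInf (insert (1 / 2) {a | ∃ x ∈ X, ∃ L : G.Walk x v, a = wkSum ρ L})

section CapDist

variable {G : SimpleGraph V} {ρ : Sym2 V → ℝ} {X Y : Set V} {u v : V} {c : ℝ}

lemma le_capDist (hc : c ≤ 1 / 2) (h : ∀ x ∈ X, ∀ L : G.Walk x v, c ≤ wkSum ρ L) :
    c ≤ capDist G ρ X v := by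
  refine le_csInf ⟨_, Set.mem_insert _ _⟩ ?_
  rintro a (rfl | ⟨x, hx, L, rfl⟩)
  exacts [hc, h x hx L]

lemma le_capDist_of_lt_half (hv : capDist G ρ X v < 1 / 2)
    (h : ∀ x ∈ X, ∀ L : G.Walk x v, c ≤ wkSum ρ L) : c ≤ capDist G ρ X v := by
  have hmin := le_capDist (min_le_left (1 / 2) c) fun x hx L => (min_le_right _ _).trans (h x hx L)
  rcases min_choice (1 / 2 : ℝ) c with hc | hc <;> rw [hc] at hmin
  exacts [absurd hmin hv.not_ge, hmin]

lemma half_le_capDist (hsep : Separates G ρ X Y) {y : V} (hy : y ∈ Y) :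
    1 / 2 ≤ capDist G ρ X y :=
  le_capDist le_rfl fun x hx L => by linarith [hsep x hx y hy L]

variable (hρ : ∀ e, 0 ≤ ρ e)
include hρ

lemma capDist_bddBelow :
    BddBelow (insert (1 / 2) {a | ∃ x ∈ X, ∃ L : G.Walk x v, a = wkSum ρ L}) := by
  refine ⟨0, ?_⟩
  rintro a (rfl | ⟨x, hx, L, rfl⟩)
  exacts [by norm_num, wkSum_nonneg hρ L]

lemma capDist_le_half : capDist G ρ X v ≤ 1 / 2 :=
  csInf_le (capDist_bddBelow hρ) (Set.mem_insert _ _)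

lemma capDist_le_wkSum {x : V} (hx : x ∈ X) (L : G.Walk x v) : capDist G ρ X v ≤ wkSum ρ L :=
  csInf_le (capDist_bddBelow hρ) (Set.mem_insert_of_mem _ ⟨x, hx, L, rfl⟩)

lemma capDist_nonneg : 0 ≤ capDist G ρ X v :=
  le_capDist (by norm_num) fun _ _ L => wkSum_nonneg hρ L

lemma capDist_eq_zero {x : V} (hx : x ∈ X) : capDist G ρ X x = 0 :=
  le_antisymm (by simpa using capDist_le_wkSum hρ hx .nil) (capDist_nonneg hρ)

lemma capDist_le_add (h : G.Adj u v) : capDist G ρ X v ≤ capDist G ρ X u + ρ s(u, v) := by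
  suffices capDist G ρ X v - ρ s(u, v) ≤ capDist G ρ X u by linarith
  refine le_capDist (by linarith [capDist_le_half hρ (G := G) (X := X) (v := v), hρ s(u, v)])
    fun x hx L => ?_
  have := capDist_le_wkSum hρ hx (L.concat h)
  rw [wkSum_concat] at this
  linarith

lemma abs_capDist_sub_le (h : G.Adj u v) :
    |capDist G ρ X u - capDist G ρ X v| ≤ ρ s(u, v) := by
  have h₁ := capDist_le_add hρ (X := X) h
  have h₂ := capDist_le_add hρ (X := X) h.symm
  rw [Sym2.eq_swap] at h₂
  exact abs_sub_le_iff.2 ⟨by linarith, by linarith⟩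

omit hρ in
lemma one_le_capDist_add_wkSum_add (hsep : Separates G ρ X Y) (P : G.Walk u v)
    (hu : capDist G ρ X u < 1 / 2) (hv : capDist G ρ Y v < 1 / 2) :
    1 ≤ capDist G ρ X u + wkSum ρ P + capDist G ρ Y v := by
  have key : ∀ y ∈ Y, ∀ L : G.Walk y v, 1 - wkSum ρ P - wkSum ρ L ≤ capDist G ρ X u :=
    fun y hy L => le_capDist_of_lt_half hu fun x hx L' => by
      have := hsep x hx y hy (L'.append (P.append L.reverse))
      rw [wkSum_append, wkSum_append, wkSum_reverse] at this
      linarith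
  have := le_capDist_of_lt_half hv (c := 1 - wkSum ρ P - capDist G ρ X u)
    fun y hy L => by linarith [key y hy L]
  linarith

lemma sum_abs_capDist_sub_le {ι : Type*} [Fintype ι] {Γ : ι → Set V}
    (hΓ : Pairwise fun i j => Separates G ρ (Γ i) (Γ j)) (h : G.Adj u v) :
    ∑ i, |capDist G ρ (Γ i) u - capDist G ρ (Γ i) v| ≤ ρ s(u, v) := by
  have hexcl : ∀ z, ∀ i j, capDist G ρ (Γ i) z < 1 / 2 → capDist G ρ (Γ j) z < 1 / 2 → i = j :=
    fun z i j hi hj => by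
      by_contra hij
      have := one_le_capDist_add_wkSum_add (hΓ hij) .nil hi hj
      rw [wkSum_nil] at this
      linarith
  refine sum_abs_sub_le_of_exclusive (hρ _) (fun _ => capDist_le_half hρ)
    (fun _ => capDist_le_half hρ) (fun _ => abs_capDist_sub_le hρ h) (hexcl u) (hexcl v)
    fun i j hij hi hj => ?_
  have := one_le_capDist_add_wkSum_add (hΓ hij) (.cons h .nil) hi hj
  rw [wkSum_cons, wkSum_nil] at this
  linarith

end CapDist

def edgeVar (f : V → ℝ) (e : Sym2 V) : ℝ := (e.map f).sup - (e.map f).inf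

lemma edgeVar_mk (f : V → ℝ) (u v : V) : edgeVar f s(u, v) = |f u - f v| := by
  simp [edgeVar, max_sub_min_eq_abs']

section Coarea

open MeasureTheory

lemma setIntegral_indicator_Ico {a b c : ℝ} (k : ℝ) (ha : 0 ≤ a) (hab : a ≤ b) (hb : b ≤ c) :
    ∫ t in Set.Ioo 0 c, (Set.Ico a b).indicator (fun _ => k) t = k * (b - a) := by
  have hvol : volume (Set.Ioo 0 c ∩ Set.Ico a b) = ENNReal.ofReal (b - a) := by
    refine le_antisymm ((measure_mono Set.inter_subset_right).trans Real.volume_Ico.le) ?_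
    rw [← Real.volume_Ioo]
    exact measure_mono fun t ht => ⟨⟨ha.trans_lt ht.1, ht.2.trans_le hb⟩, ht.1.le, ht.2⟩
  rw [setIntegral_indicator measurableSet_Ico, setIntegral_const, measureReal_def, hvol,
    ENNReal.toReal_ofReal (sub_nonneg.2 hab), smul_eq_mul, mul_comm]

variable {G : SimpleGraph V} {f : V → ℝ} {t : ℝ}

lemma mem_mu_sublevel_iff {e : Sym2 V} :
    e ∈ mu G {v | f v ≤ t} ↔ e ∈ G.edgeSet ∧ t ∈ Set.Ico (e.map f).inf (e.map f).sup := by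
  induction e using Sym2.ind with
  | h u v =>
    simp only [mu, Set.mem_ofPred_eq, Sym2.map_mk, Sym2.inf_mk, Sym2.sup_mk, Set.mem_Ico,
      inf_le_iff, lt_sup_iff, not_le]
    refine and_congr_right fun _ => ⟨?_, ?_⟩
    · rintro ⟨x, y, hxy, hx, hy⟩
      rcases Sym2.eq_iff.mp hxy with ⟨rfl, rfl⟩ | ⟨rfl, rfl⟩ <;> tauto
    · rintro ⟨hu | hv, hu' | hv'⟩
      · exact absurd hu hu'.not_ge
      · exact ⟨u, v, rfl, hu, hv'⟩
      · exact ⟨v, u, Sym2.eq_swap, hv, hu'⟩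
      · exact absurd hv hv'.not_ge

variable [Fintype V] {w : Sym2 V → ℝ}

lemma wsum_mu_sublevel : wsum w (mu G {v | f v ≤ t}) =
    wsum (fun e => (Set.Ico (e.map f).inf (e.map f).sup).indicator (fun _ => w e) t)
      G.edgeSet := by
  simp only [wsum_eq_sum_indicator]
  refine Finset.sum_congr rfl fun e _ => ?_
  by_cases he : e ∈ G.edgeSet <;> simp [Set.indicator_apply, mem_mu_sublevel_iff, he]

lemma integrableOn_indicator_Ico_const (a b c k : ℝ) :
    IntegrableOn (fun t => (Set.Ico a b).indicator (fun _ => k) t) (Set.Ioo 0 c) :=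
  (integrableOn_const measure_Ioo_lt_top.ne).indicator measurableSet_Ico

lemma integrableOn_wsum_mu_sublevel (c : ℝ) :
    IntegrableOn (fun t => wsum w (mu G {v | f v ≤ t})) (Set.Ioo 0 c) := by
  simp_rw [wsum_mu_sublevel]
  exact integrable_finsetSum _ fun e _ => integrableOn_indicator_Ico_const _ _ _ _

-- the discrete coarea formula
lemma integral_wsum_mu_sublevel {c : ℝ} (hf₀ : ∀ v, 0 ≤ f v) (hfc : ∀ v, f v ≤ c) :
    ∫ t in Set.Ioo 0 c, wsum w (mu G {v | f v ≤ t}) =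
      wsum (fun e => w e * edgeVar f e) G.edgeSet := by
  simp_rw [wsum_mu_sublevel]
  unfold wsum
  rw [integral_finsetSum _ fun e _ => integrableOn_indicator_Ico_const _ _ _ _]
  refine Finset.sum_congr rfl fun e _ => setIntegral_indicator_Ico _ ?_ (Sym2.inf_le_sup _) ?_
  · induction e using Sym2.ind with
    | h u v => simpa using ⟨hf₀ u, hf₀ v⟩
  · induction e using Sym2.ind with
    | h u v => simpa using ⟨hfc u, hfc v⟩

end Coarea

section LowerBound

open MeasureTheory

variable [Fintype V] {G : SimpleGraph V} {w : Sym2 V → ℝ} {ρ : Sym2 V → ℝ}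

lemma half_sum_minCut_le {ι : Type*} [Fintype ι] {Γ Y : ι → Set V} (hw : ∀ e, 0 ≤ w e)
    (hρ : ∀ e, 0 ≤ ρ e) (hΓ : Pairwise fun i j => Separates G ρ (Γ i) (Γ j))
    (hY : ∀ i, Separates G ρ (Γ i) (Y i)) :
    (∑ i, minCut G w (Γ i) (Y i)) / 2 ≤ wsum (fun e => w e * ρ e) G.edgeSet := by
  let d i := capDist G ρ (Γ i)
  have hcut : ∀ i, ∀ t ∈ Set.Ioo (0 : ℝ) (1 / 2),
      minCut G w (Γ i) (Y i) ≤ wsum w (mu G {v | d i v ≤ t}) := fun i t ht =>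
    minCut_le hw ⟨fun x hx => (capDist_eq_zero hρ hx).trans_le ht.1.le,
      fun y hy (hle : d i y ≤ t) => by linarith [half_le_capDist (hY i) hy, ht.2]⟩
  have hedge : ∀ e ∈ G.edgeSet, ∑ i, edgeVar (d i) e ≤ ρ e := by
    intro e he
    induction e using Sym2.ind with
    | h u v => simpa only [edgeVar_mk] using sum_abs_capDist_sub_le hρ hΓ he
  calc (∑ i, minCut G w (Γ i) (Y i)) / 2
      = ∫ _ in Set.Ioo (0 : ℝ) (1 / 2), ∑ i, minCut G w (Γ i) (Y i) := by
        rw [setIntegral_const, Real.volume_real_Ioo, sub_zero, max_eq_left (by norm_num),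
          smul_eq_mul]
        ring
    _ ≤ ∫ t in Set.Ioo (0 : ℝ) (1 / 2), ∑ i, wsum w (mu G {v | d i v ≤ t}) :=
        setIntegral_mono_on (integrableOn_const measure_Ioo_lt_top.ne)
          (integrable_finsetSum _ fun i _ => integrableOn_wsum_mu_sublevel _) measurableSet_Ioo
          fun t ht => Finset.sum_le_sum fun i _ => hcut i t ht
    _ = ∑ i, wsum (fun e => w e * edgeVar (d i) e) G.edgeSet := by
        rw [integral_finsetSum _ fun i _ => integrableOn_wsum_mu_sublevel _]
        exact Finset.sum_congr rfl fun i _ =>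
          integral_wsum_mu_sublevel (fun _ => capDist_nonneg hρ) (fun _ => capDist_le_half hρ)
    _ = wsum (fun e => w e * ∑ i, edgeVar (d i) e) G.edgeSet := by
        simp only [wsum, Finset.mul_sum]
        exact Finset.sum_comm
    _ ≤ wsum (fun e => w e * ρ e) G.edgeSet :=
        wsum_le_wsum fun e he => mul_le_mul_of_nonneg_left (hedge e he) (hw e)

lemma sInf_lpValues (hw : ∀ e, 0 ≤ w e) {A B C : Set V} (hAB : Disjoint A B)
    (hAC : Disjoint A C) (hBC : Disjoint B C) :
    sInf (lpValues G w A B C) =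
      (minCut G w A (B ∪ C) + minCut G w B (A ∪ C) + minCut G w C (A ∪ B)) / 2 := by
  have hmem := half_sum_minCut_mem_lpValues (G := G) (w := w) hAB hAC hBC
  refine le_antisymm (csInf_le ⟨0, ?_⟩ hmem) (le_csInf ⟨_, hmem⟩ ?_)
  · rintro _ ⟨ρ, hρ, -, rfl⟩
    exact wsum_nonneg fun e => mul_nonneg (hw e) (hρ e)
  · rintro _ ⟨ρ, hρ, ⟨sAB, sAC, sBC⟩, rfl⟩
    have hΓ : Pairwise fun i j => Separates G ρ (![A, B, C] i) (![A, B, C] j) := by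
      intro i j hij
      fin_cases i <;> fin_cases j <;>
        first
          | exact (hij rfl).elim
          | simpa using sAB | simpa using sAC | simpa using sBC
          | simpa using sAB.symm | simpa using sAC.symm | simpa using sBC.symm
    have hY : ∀ i, Separates G ρ (![A, B, C] i) (![B ∪ C, A ∪ C, A ∪ B] i) := by
      intro i
      fin_cases i
      exacts [sAB.union_right sAC, sAB.symm.union_right sBC, sAC.symm.union_right sBC.symm]
    simpa [Fin.sum_univ_three, add_assoc] using half_sum_minCut_le hw hρ hΓ hY

end LowerBound

end RTN

theorem multiway_cut_integer_program_and_relaxation_general {V : Type*} [Fintype V]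
    (G : SimpleGraph V) (w : Sym2 V → ℝ) (hw : ∀ e, 0 ≤ w e)
    (A B C : Set V) (hbdy : RTN.Bdy A B C) :
    sInf {a | ∃ ρ : Sym2 V → ℕ,
        ((∀ x ∈ A, ∀ y ∈ B, ∀ L : G.Walk x y,
            1 ≤ RTN.wkSum (fun e => (ρ e : ℤ)) L) ∧
         (∀ x ∈ A, ∀ y ∈ C, ∀ L : G.Walk x y,
            1 ≤ RTN.wkSum (fun e => (ρ e : ℤ)) L) ∧
         (∀ x ∈ B, ∀ y ∈ C, ∀ L : G.Walk x y,
            1 ≤ RTN.wkSum (fun e => (ρ e : ℤ)) L)) ∧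
        a = RTN.wsum (fun e => w e * (ρ e : ℝ)) G.edgeSet}
      = RTN.triCut G w 1 1 1 A B C ∧
    sInf {a | ∃ ρ : Sym2 V → ℝ, (∀ e, 0 ≤ ρ e) ∧
        ((∀ x ∈ A, ∀ y ∈ B, ∀ L : G.Walk x y, 1 ≤ RTN.wkSum ρ L) ∧
         (∀ x ∈ A, ∀ y ∈ C, ∀ L : G.Walk x y, 1 ≤ RTN.wkSum ρ L) ∧
         (∀ x ∈ B, ∀ y ∈ C, ∀ L : G.Walk x y, 1 ≤ RTN.wkSum ρ L)) ∧
        a = RTN.wsum (fun e => w e * ρ e) G.edgeSet}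
      = (RTN.minCut G w A (B ∪ C) + RTN.minCut G w B (A ∪ C)
          + RTN.minCut G w C (A ∪ B)) / 2 := by
  obtain ⟨hAB, hAC, hBC⟩ := hbdy
  exact ⟨RTN.sInf_ipValues hw, RTN.sInf_lpValues hw hAB hAC hBC⟩

/-- (i) The integer program `min Σ_e w(e)ρ(e)` over `ρ : E → ℤ_{≥0}`
subject to `ρ(L) ≥ 1` for every path `L` between two distinct boundary components has
optimal value the minimal triway cut area with unit tensions; (ii) its linear relaxation
has optimal value `½(𝒜(A:B∪C) + 𝒜(B:A∪C) + 𝒜(C:A∪B))`. -/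
theorem multiway_cut_integer_program_and_relaxation {V : Type*} [Fintype V]
    (G : SimpleGraph V) (w : Sym2 V → ℝ) (hw : ∀ e, 0 ≤ w e)
    (A B C : Set V) (hbdy : RTN.Bdy A B C)
    (hcomp : ∀ v : V, ∃ b ∈ A ∪ B ∪ C, G.Reachable v b)
    (n : ℕ) (hn : 2 ≤ n) :
    sInf {a | ∃ ρ : Sym2 V → ℕ,
        ((∀ x ∈ A, ∀ y ∈ B, ∀ L : G.Walk x y,
            1 ≤ RTN.wkSum (fun e => (ρ e : ℤ)) L) ∧
         (∀ x ∈ A, ∀ y ∈ C, ∀ L : G.Walk x y,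
            1 ≤ RTN.wkSum (fun e => (ρ e : ℤ)) L) ∧
         (∀ x ∈ B, ∀ y ∈ C, ∀ L : G.Walk x y,
            1 ≤ RTN.wkSum (fun e => (ρ e : ℤ)) L)) ∧
        a = RTN.wsum (fun e => w e * (ρ e : ℝ)) G.edgeSet}
      = RTN.triCut G w 1 1 1 A B C ∧
    sInf {a | ∃ ρ : Sym2 V → ℝ, (∀ e, 0 ≤ ρ e) ∧
        ((∀ x ∈ A, ∀ y ∈ B, ∀ L : G.Walk x y, 1 ≤ RTN.wkSum ρ L) ∧
         (∀ x ∈ A, ∀ y ∈ C, ∀ L : G.Walk x y, 1 ≤ RTN.wkSum ρ L) ∧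
         (∀ x ∈ B, ∀ y ∈ C, ∀ L : G.Walk x y, 1 ≤ RTN.wkSum ρ L)) ∧
        a = RTN.wsum (fun e => w e * ρ e) G.edgeSet}
      = (RTN.minCut G w A (B ∪ C) + RTN.minCut G w B (A ∪ C)
          + RTN.minCut G w C (A ∪ B)) / 2 :=
  multiway_cut_integer_program_and_relaxation_general G w hw A B C hbdy
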